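/- Let A ⊆ F_p be finite and K > 0. Then ∑_{ξ ≠ 0, E_+(A,ξA) ≤ |A|³/K} (E_+(A, ξA) − |A|⁴/p)² ≤ p|A|⁵/K. -/

import Mathlib

open Finset

/-! With `m = |A|⁴/p`, Cauchy–Schwarz over the fibres of `(a, c) ↦ a - ξc` gives `E₊(A, ξA) ≥ m`
for every `ξ`, so each summand satisfies `(E₊ - m)² ≤ (|A|³/K)(E₊ - m)`. Summing over all `ξ`, a
quadruple with `a₃ ≠ a₄` is counted for at most one `ξ`, and only the `|A|²` quadruples with
`a₁ = a₂`, `a₃ = a₄` are counted `p` times; hence `∑_ξ (E₊ - m) ≤ |A|⁴ + p|A|² - pm = p|A|²`. -/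

/-- `E₊(A, ξA)`: number of quadruples `(a₁,a₂,a₃,a₄) ∈ A⁴` with `a₁ - a₂ = ξ(a₃ - a₄)`. -/
def addEnergy {p : ℕ} (A : Finset (ZMod p)) (ξ : ZMod p) : ℕ :=
  ((A ×ˢ A ×ˢ A ×ˢ A).filter
    (fun q => q.1 - q.2.1 = ξ * (q.2.2.1 - q.2.2.2))).card

namespace Finset

variable {α β : Type*} [DecidableEq β] [Fintype β]

lemma card_filter_apply_eq_eq_sum_sq (s : Finset α) (f : α → β) :
    #{xy ∈ s ×ˢ s | f xy.1 = f xy.2} = ∑ b, #{x ∈ s | f x = b} ^ 2 := by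
  rw [card_eq_sum_card_fiberwise (f := fun xy => f xy.1) (t := univ) fun _ _ => mem_univ _]
  refine sum_congr rfl fun b _ => ?_
  rw [sq, ← card_product]
  congr 1
  ext ⟨x, y⟩
  simp only [mem_filter, mem_product]
  grind

lemma card_sq_le_card_mul_card_filter_apply_eq (s : Finset α) (f : α → β) :
    #s ^ 2 ≤ Fintype.card β * #{xy ∈ s ×ˢ s | f xy.1 = f xy.2} := by
  rw [card_filter_apply_eq_eq_sum_sq, card_eq_sum_card_fiberwise (f := f) (t := univ)
    fun _ _ => mem_univ _]
  exact sq_sum_le_card_mul_sum_sq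

end Finset

lemma card_filter_eq_mul_le {M : Type*} [MonoidWithZero M] [IsRightCancelMulZero M] [Fintype M]
    [DecidableEq M] (x y : M) :
    #{ξ | x = ξ * y} ≤ 1 + if x = 0 ∧ y = 0 then Fintype.card M else 0 := by
  by_cases hy : y = 0
  · subst hy
    by_cases hx : x = 0 <;> simp [hx]
  · refine (card_le_one.2 fun ξ₁ h₁ ξ₂ h₂ => ?_).trans (Nat.le_add_right _ _)
    simp only [mem_filter] at h₁ h₂
    exact mul_right_cancel₀ hy (h₁.2.symm.trans h₂.2)

lemma sum_filter_sq_sub_le_mul_sum_sub {ι R : Type*} [CommRing R] [LinearOrder R]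
    [IsStrictOrderedRing R] (s : Finset ι) (f : ι → R) {m T : R} (hm : 0 ≤ m) (hT : 0 ≤ T)
    (hf : ∀ i ∈ s, m ≤ f i) :
    ∑ i ∈ s with f i ≤ T, (f i - m) ^ 2 ≤ T * ∑ i ∈ s, (f i - m) := by
  calc ∑ i ∈ s with f i ≤ T, (f i - m) ^ 2
      ≤ ∑ i ∈ s with f i ≤ T, T * (f i - m) := by
        refine sum_le_sum fun i hi => ?_
        obtain ⟨hi, hiT⟩ := mem_filter.1 hi
        rw [sq]
        exact mul_le_mul_of_nonneg_right (by linarith) (sub_nonneg.2 (hf i hi))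
    _ ≤ ∑ i ∈ s, T * (f i - m) :=
        sum_le_sum_of_subset_of_nonneg (filter_subset _ _) fun i hi _ =>
          mul_nonneg hT (sub_nonneg.2 (hf i hi))
    _ = T * ∑ i ∈ s, (f i - m) := (mul_sum _ _ _).symm

section Energy

variable {p : ℕ}

lemma addEnergy_eq_card_filter_sub_mul_eq (A : Finset (ZMod p)) (ξ : ZMod p) :
    _root_.addEnergy A ξ =
      #{xy ∈ (A ×ˢ A) ×ˢ (A ×ˢ A) | xy.1.1 - ξ * xy.1.2 = xy.2.1 - ξ * xy.2.2} := by
  refine card_nbij' (fun q => ((q.1, q.2.2.1), (q.2.1, q.2.2.2)))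
    (fun r => (r.1.1, r.2.1, r.1.2, r.2.2)) ?_ ?_ (fun _ _ => rfl) (fun _ _ => rfl)
  · rintro ⟨a, b, c, d⟩
    simp only [coe_filter, mem_product, Set.mem_ofPred_eq]
    grind
  · rintro ⟨⟨a, c⟩, b, d⟩
    simp only [coe_filter, mem_product, Set.mem_ofPred_eq]
    grind

lemma card_pow_four_le_mul_addEnergy [NeZero p] (A : Finset (ZMod p)) (ξ : ZMod p) :
    #A ^ 4 ≤ p * _root_.addEnergy A ξ := by
  have := card_sq_le_card_mul_card_filter_apply_eq (A ×ˢ A) fun ac => ac.1 - ξ * ac.2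
  rwa [card_product, ← sq, ← pow_mul, ZMod.card, ← addEnergy_eq_card_filter_sub_mul_eq] at this

lemma sum_addEnergy_le [Fact p.Prime] (A : Finset (ZMod p)) :
    ∑ ξ, _root_.addEnergy A ξ ≤ #A ^ 4 + p * #A ^ 2 := by
  set Q := A ×ˢ A ×ˢ A ×ˢ A
  have hdiag : #{q ∈ Q | q.1 - q.2.1 = 0 ∧ q.2.2.1 - q.2.2.2 = 0} ≤ #A ^ 2 := by
    calc _ ≤ #((A ×ˢ A).image fun ac => (ac.1, ac.1, ac.2, ac.2)) := by
          refine card_le_card ?_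
          rintro ⟨a, b, c, d⟩ hq
          simp only [Q, mem_filter, mem_product, sub_eq_zero] at hq
          obtain ⟨⟨ha, -, hc, -⟩, rfl, rfl⟩ := hq
          exact mem_image.2 ⟨(a, c), mem_product.2 ⟨ha, hc⟩, rfl⟩
      _ ≤ #A ^ 2 := by rw [sq, ← card_product]; exact card_image_le
  calc ∑ ξ, _root_.addEnergy A ξ
      = ∑ q ∈ Q, #{ξ : ZMod p | q.1 - q.2.1 = ξ * (q.2.2.1 - q.2.2.2)} := by
        simp only [_root_.addEnergy, card_filter]
        exact sum_comm
    _ ≤ ∑ q ∈ Q, (1 + if q.1 - q.2.1 = 0 ∧ q.2.2.1 - q.2.2.2 = 0 then p else 0) := by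
        gcongr with q
        simpa using card_filter_eq_mul_le (q.1 - q.2.1) (q.2.2.1 - q.2.2.2)
    _ = #Q + p * #{q ∈ Q | q.1 - q.2.1 = 0 ∧ q.2.2.1 - q.2.2.2 = 0} := by
        simp [sum_add_distrib, sum_ite, mul_comm]
    _ ≤ #A ^ 4 + p * #A ^ 2 := by
        rw [show #Q = #A ^ 4 by simp only [Q, card_product]; ring]
        gcongr

lemma card_pow_four_div_le_addEnergy [NeZero p] (A : Finset (ZMod p)) (ξ : ZMod p) :
    (#A : ℝ) ^ 4 / p ≤ _root_.addEnergy A ξ := by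
  rw [div_le_iff₀' (by exact_mod_cast Nat.pos_of_neZero p)]
  exact_mod_cast card_pow_four_le_mul_addEnergy A ξ

lemma sum_addEnergy_sub_le [Fact p.Prime] (A : Finset (ZMod p)) :
    ∑ ξ, ((_root_.addEnergy A ξ : ℝ) - (#A : ℝ) ^ 4 / p) ≤ p * (#A : ℝ) ^ 2 := by
  have hp : (p : ℝ) ≠ 0 := by exact_mod_cast (Fact.out : p.Prime).ne_zero
  have hsum : (∑ ξ, _root_.addEnergy A ξ : ℝ) ≤ (#A : ℝ) ^ 4 + p * (#A : ℝ) ^ 2 := by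
    exact_mod_cast sum_addEnergy_le A
  rw [sum_sub_distrib, sum_const, card_univ, ZMod.card, nsmul_eq_mul, mul_div_cancel₀ _ hp]
  linarith

end Energy

theorem stmt12 {p : ℕ} [Fact p.Prime] (A : Finset (ZMod p)) (K : ℝ) (hK : 0 < K) :
    ∑ ξ ∈ (univ : Finset (ZMod p)).filter
        (fun ξ : ZMod p => ξ ≠ 0 ∧
          (addEnergy A ξ : ℝ) ≤ (A.card : ℝ) ^ 3 / K),
        ((addEnergy A ξ : ℝ) - (A.card : ℝ) ^ 4 / p) ^ 2
      ≤ p * (A.card : ℝ) ^ 5 / K := by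
  have hm : 0 ≤ (#A : ℝ) ^ 4 / p := by positivity
  have hT : 0 ≤ (#A : ℝ) ^ 3 / K := by positivity
  rw [← filter_filter]
  calc _ ≤ (#A : ℝ) ^ 3 / K *
          ∑ ξ : ZMod p with ξ ≠ 0, ((_root_.addEnergy A ξ : ℝ) - (#A : ℝ) ^ 4 / p) :=
        sum_filter_sq_sub_le_mul_sum_sub _ _ hm hT fun ξ _ => card_pow_four_div_le_addEnergy A ξ
    _ ≤ (#A : ℝ) ^ 3 / K * ∑ ξ, ((_root_.addEnergy A ξ : ℝ) - (#A : ℝ) ^ 4 / p) := by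
        gcongr
        · exact fun ξ _ _ => sub_nonneg.2 (card_pow_four_div_le_addEnergy A ξ)
        · exact filter_subset _ _
    _ ≤ (#A : ℝ) ^ 3 / K * (p * (#A : ℝ) ^ 2) := by gcongr; exact sum_addEnergy_sub_le A
    _ = p * (#A : ℝ) ^ 5 / K := by ring
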